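/- Let σ be a finite nonnegative measure on ℝ with compact support contained in [-R, R], and let s_j = ∫ u^j dσ(u) be its moments. Then for each N ∈ ℕ and for z = iy with y → ∞, one has y^{2N+1} · |f(iy) + Σ_{j=0}^{2N-1} s_j/(iy)^{j+1} + s_{2N}/(iy)^{2N+1}| → 0, where f(z) = ∫ dσ(u)/(u - z) is the Stieltjes transform of σ. -/

import Mathlib

open MeasureTheory Filter Complex

/-!
Expanding `(u - z)⁻¹` as a geometric series in `u / z` and stopping after `n` terms leaves the
remainder `u ^ n / (z ^ n * (u - z))`. Integrating against `σ` turns the partial sum into the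
moment sum. On the support `|u| ≤ R`, and `|u - z| ≥ |Im z|`, so the integrated remainder is at most
`R ^ n σ(ℝ) / (|z| ^ n |Im z|)`. On `z = i y` this is `O(y ^ (-n-1))`.
-/

theorem inv_sub_add_sum_pow_div_pow_succ {w z : ℂ} (hz : z ≠ 0) (hwz : w ≠ z) (n : ℕ) :
    (w - z)⁻¹ + ∑ j ∈ Finset.range n, w ^ j / z ^ (j + 1) = w ^ n / (z ^ n * (w - z)) := by
  have hwz' : w - z ≠ 0 := sub_ne_zero.mpr hwz
  induction n with
  | zero => simp
  | succ n ih =>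
    rw [Finset.sum_range_succ, ← add_assoc, ih]
    field_simp
    ring

theorem ofReal_ne_of_im_ne_zero {z : ℂ} (hz : z.im ≠ 0) (u : ℝ) : (u : ℂ) ≠ z :=
  fun h => hz (by rw [← h, ofReal_im])

theorem abs_im_le_norm_ofReal_sub (z : ℂ) (u : ℝ) : |z.im| ≤ ‖(u : ℂ) - z‖ := by
  simpa [abs_sub_comm] using abs_im_le_norm ((u : ℂ) - z)

theorem integral_ofReal_pow (σ : Measure ℝ) (j : ℕ) :
    ∫ u, (u : ℂ) ^ j ∂σ = ((∫ u, u ^ j ∂σ : ℝ) : ℂ) := by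
  simp_rw [← ofReal_pow]
  exact integral_ofReal

section StieltjesTransform

variable {σ : Measure ℝ} [IsFiniteMeasure σ] {R : ℝ}

theorem integrable_ofReal_pow_of_ae_abs_le (hσ : ∀ᵐ u ∂σ, |u| ≤ R) (j : ℕ) :
    Integrable (fun u : ℝ => (u : ℂ) ^ j) σ := by
  refine .of_bound (by fun_prop) (R ^ j) ?_
  filter_upwards [hσ] with u hu
  rw [norm_pow, norm_real, Real.norm_eq_abs]
  exact pow_le_pow_left₀ (abs_nonneg u) hu j

theorem integrable_inv_ofReal_sub {z : ℂ} (hz : z.im ≠ 0) :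
    Integrable (fun u : ℝ => ((u : ℂ) - z)⁻¹) σ := by
  refine .of_bound ?_ |z.im|⁻¹ (Eventually.of_forall fun u => ?_)
  · exact (Continuous.inv₀ (by fun_prop)
      fun u => sub_ne_zero.mpr (ofReal_ne_of_im_ne_zero hz u)).aestronglyMeasurable
  · rw [norm_inv]
    exact inv_anti₀ (abs_pos.mpr hz) (abs_im_le_norm_ofReal_sub z u)

theorem stieltjes_add_moment_sum_eq_integral (hσ : ∀ᵐ u ∂σ, |u| ≤ R) {z : ℂ} (hz : z.im ≠ 0)
    (n : ℕ) :
    ∫ u, ((u : ℂ) - z)⁻¹ ∂σ + ∑ j ∈ Finset.range n, ((∫ u, u ^ j ∂σ : ℝ) : ℂ) / z ^ (j + 1) =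
      ∫ u, (u : ℂ) ^ n / (z ^ n * ((u : ℂ) - z)) ∂σ := by
  have hz0 : z ≠ 0 := fun h => hz (by rw [h, zero_im])
  have hterm (j : ℕ) : Integrable (fun u : ℝ => (u : ℂ) ^ j / z ^ (j + 1)) σ :=
    (integrable_ofReal_pow_of_ae_abs_le hσ j).div_const _
  simp_rw [← integral_ofReal_pow σ, ← integral_div]
  rw [← integral_finsetSum _ fun j _ => hterm j,
    ← integral_add (integrable_inv_ofReal_sub hz) (integrable_finsetSum _ fun j _ => hterm j)]
  exact integral_congr_ae (Eventually.of_forall fun u =>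
    inv_sub_add_sum_pow_div_pow_succ hz0 (ofReal_ne_of_im_ne_zero hz u) n)

theorem norm_pow_mul_norm_integral_remainder_le (hσ : ∀ᵐ u ∂σ, |u| ≤ R) {z : ℂ}
    (hz : z.im ≠ 0) (n : ℕ) :
    ‖z‖ ^ n * ‖∫ u, (u : ℂ) ^ n / (z ^ n * ((u : ℂ) - z)) ∂σ‖ ≤
      R ^ n * σ.real Set.univ / |z.im| := by
  have hz0 : 0 < ‖z‖ := norm_pos_iff.mpr fun h => hz (by rw [h, zero_im])
  have hbound : ∀ᵐ (u : ℝ) ∂σ, ‖(u : ℂ) ^ n / (z ^ n * ((u : ℂ) - z))‖ ≤ R ^ n / (‖z‖ ^ n * |z.im|) := by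
    filter_upwards [hσ] with u hu
    rw [norm_div, norm_mul, norm_pow, norm_pow, norm_real, Real.norm_eq_abs]
    gcongr
    · exact pow_nonneg ((abs_nonneg u).trans hu) n
    · exact abs_im_le_norm_ofReal_sub z u
  calc ‖z‖ ^ n * ‖∫ u, (u : ℂ) ^ n / (z ^ n * ((u : ℂ) - z)) ∂σ‖
      ≤ ‖z‖ ^ n * (R ^ n / (‖z‖ ^ n * |z.im|) * σ.real Set.univ) :=
        mul_le_mul_of_nonneg_left (norm_integral_le_of_norm_le_const hbound) (by positivity)
    _ = R ^ n * σ.real Set.univ / |z.im| := by field_simp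

end StieltjesTransform

theorem hamburger_nevanlinna_imaginary_axis_general
    (σ : Measure ℝ) [IsFiniteMeasure σ] (R : ℝ)
    (hsupp : σ (Set.Icc (-R) R)ᶜ = 0)
    (s : ℕ → ℝ) (hs : ∀ j, s j = ∫ u, u ^ j ∂σ)
    (f : ℂ → ℂ) (hf : ∀ z : ℂ, z.im ≠ 0 → f z = ∫ u, ((u : ℂ) - z)⁻¹ ∂σ)
    (N : ℕ) :
    Tendsto (fun y : ℝ =>
        y ^ (2 * N + 1) *
          ‖f (Complex.I * y) +
            (∑ j ∈ Finset.range (2 * N), (s j : ℂ) / (Complex.I * y) ^ (j + 1)) +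
            (s (2 * N) : ℂ) / (Complex.I * y) ^ (2 * N + 1)‖)
      atTop (nhds 0) := by
  have hIcc : ∀ᵐ u ∂σ, u ∈ Set.Icc (-R) R := mem_ae_iff.mpr hsupp
  have hσ : ∀ᵐ u ∂σ, |u| ≤ R := hIcc.mono fun u hu => abs_le.mpr hu
  refine squeeze_zero' ?_ ?_ (tendsto_const_nhds.div_atTop tendsto_id :
    Tendsto (fun y : ℝ => R ^ (2 * N + 1) * σ.real Set.univ / y) atTop (nhds 0))
  all_goals filter_upwards [eventually_gt_atTop 0] with y hy
  · positivity
  · have him : (I * y).im = y := by simp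
    have hnorm : ‖I * y‖ = y := by simp [abs_of_pos hy]
    have him0 : (I * y).im ≠ 0 := by rw [him]; exact hy.ne'
    have hrem := norm_pow_mul_norm_integral_remainder_le hσ him0 (2 * N + 1)
    rw [hnorm, him, abs_of_pos hy, ← stieltjes_add_moment_sum_eq_integral hσ him0,
      Finset.sum_range_succ, ← hf _ him0, ← add_assoc] at hrem
    simpa only [hs] using hrem

theorem hamburger_nevanlinna_imaginary_axis
    (σ : Measure ℝ) [IsFiniteMeasure σ] (R : ℝ) (hR : 0 < R)
    (hsupp : σ (Set.Icc (-R) R)ᶜ = 0)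
    (s : ℕ → ℝ) (hs : ∀ j, s j = ∫ u, u ^ j ∂σ)
    (f : ℂ → ℂ) (hf : ∀ z : ℂ, z.im ≠ 0 → f z = ∫ u, ((u : ℂ) - z)⁻¹ ∂σ)
    (N : ℕ) :
    Tendsto (fun y : ℝ =>
        y ^ (2 * N + 1) *
          ‖f (Complex.I * y) +
            (∑ j ∈ Finset.range (2 * N), (s j : ℂ) / (Complex.I * y) ^ (j + 1)) +
            (s (2 * N) : ℂ) / (Complex.I * y) ^ (2 * N + 1)‖)
      atTop (nhds 0) :=
  hamburger_nevanlinna_imaginary_axis_general σ R hsupp s hs f hf N
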